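/- arXiv:2006.12238 — 2 statements merged into one kernel-verified Lean document; each statement's English description precedes it below -/
import Mathlib

section
/- Let A ∈ ℂ and B > 0 be real, and set Γ = |A|²/B. Then for every γ > −1 and every ξ ∈ ℂ, log(1 + γ) − γ + 2√(1 + γ)·Re(conj(ξ)·A) − |ξ|²·(|A|² + B) ≤ log(1 + Γ), and equality holds for γ = Γ and ξ = √(1 + Γ)·A/(|A|² + B). -/
/-!
Split the objective into its `γ`-part and its `ξ`-part. For fixed `γ`, completing the square
`0 ≤ ‖C ξ - s A‖²` with `C = |A|² + B`, `s = √(1 + γ)` bounds the `ξ`-part by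
`(1 + γ) |A|² / C = (1 + γ) Γ / (1 + Γ)`, attained at `ξ = s A / C`. What remains is the
Lagrangian dual objective `log (1 + γ) - γ + (1 + γ) Γ / (1 + Γ)`, which is at most `log (1 + Γ)`
by `log x ≤ x - 1` at `x = (1 + γ) / (1 + Γ)`, with equality at `γ = Γ`.
-/

open Real RealInnerProductSpace

section QuadraticTransform

variable {E : Type*} [NormedAddCommGroup E] [InnerProductSpace ℝ E]

lemma two_mul_inner_sub_norm_sq_mul_le (x a : E) (s : ℝ) {C : ℝ} (hC : 0 < C) :
    2 * s * ⟪x, a⟫ - ‖x‖ ^ 2 * C ≤ s ^ 2 * ‖a‖ ^ 2 / C := by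
  have hsq : 0 ≤ ‖C • x - s • a‖ ^ 2 := sq_nonneg _
  rw [norm_sub_sq_real, norm_smul, norm_smul, real_inner_smul_left, real_inner_smul_right,
    mul_pow, mul_pow, Real.norm_eq_abs, Real.norm_eq_abs, sq_abs, sq_abs] at hsq
  rw [le_div_iff₀ hC]
  nlinarith

lemma two_mul_inner_smul_sub_norm_sq_mul (a : E) (s : ℝ) {C : ℝ} (hC : C ≠ 0) :
    2 * s * ⟪(s / C) • a, a⟫ - ‖(s / C) • a‖ ^ 2 * C = s ^ 2 * ‖a‖ ^ 2 / C := by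
  rw [real_inner_smul_left, real_inner_self_eq_norm_sq, norm_smul, mul_pow, Real.norm_eq_abs,
    sq_abs]
  field_simp
  ring

end QuadraticTransform

section LagrangianDualTransform

/-- The paper's `f(γ)` for a user of SINR `Γ`. -/
noncomputable def lagrangianDualObjective (Γ γ : ℝ) : ℝ :=
  log (1 + γ) - γ + (1 + γ) * Γ / (1 + Γ)

lemma lagrangianDualObjective_le {Γ γ : ℝ} (hΓ : -1 < Γ) (hγ : -1 < γ) :
    lagrangianDualObjective Γ γ ≤ log (1 + Γ) := by
  have hΓ1 : 0 < 1 + Γ := by linarith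
  have hγ1 : 0 < 1 + γ := by linarith
  have hlog := log_le_sub_one_of_pos (div_pos hγ1 hΓ1)
  rw [log_div hγ1.ne' hΓ1.ne'] at hlog
  have hsplit : (1 + γ) * Γ / (1 + Γ) - γ = 1 - (1 + γ) / (1 + Γ) := by
    field_simp
    ring
  unfold lagrangianDualObjective
  linarith

lemma lagrangianDualObjective_self {Γ : ℝ} (hΓ : -1 < Γ) :
    lagrangianDualObjective Γ Γ = log (1 + Γ) := by
  have hΓ1 : 1 + Γ ≠ 0 := by linarith
  unfold lagrangianDualObjective
  rw [mul_div_cancel_left₀ Γ hΓ1]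
  ring

end LagrangianDualTransform

lemma Complex.re_conj_mul_eq_inner (ξ A : ℂ) : ((starRingEnd ℂ) ξ * A).re = ⟪ξ, A⟫ := by
  rw [Complex.inner, mul_comm]

/-- Per-user equivalence of (P1) and (P2): with `Γ = |A|²/B`, for all `γ > −1` and `ξ ∈ ℂ`,
`log(1+γ) − γ + 2√(1+γ) Re(conj(ξ) A) − |ξ|² (|A|² + B) ≤ log(1+Γ)`, with equality at
`γ = Γ`, `ξ = √(1+Γ) A/(|A|² + B)`. -/
theorem per_user_transform_equivalence (A : ℂ) (B : ℝ) (hB : 0 < B) :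
    let Γ : ℝ := ‖A‖ ^ 2 / B
    (∀ γ : ℝ, -1 < γ → ∀ ξ : ℂ,
      Real.log (1 + γ) - γ + 2 * Real.sqrt (1 + γ) * ((starRingEnd ℂ) ξ * A).re
        - ‖ξ‖ ^ 2 * (‖A‖ ^ 2 + B) ≤ Real.log (1 + Γ)) ∧
    (Real.log (1 + Γ) - Γ
        + 2 * Real.sqrt (1 + Γ)
          * ((starRingEnd ℂ) ((Real.sqrt (1 + Γ) : ℂ) * A / ((‖A‖ ^ 2 + B : ℝ) : ℂ)) * A).re
        - ‖(Real.sqrt (1 + Γ) : ℂ) * A / ((‖A‖ ^ 2 + B : ℝ) : ℂ)‖ ^ 2 * (‖A‖ ^ 2 + B)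
      = Real.log (1 + Γ)) := by
  intro Γ
  have hΓ : -1 < Γ := by linarith [show 0 ≤ Γ by positivity]
  have hC : 0 < ‖A‖ ^ 2 + B := by positivity
  have hsnr (t : ℝ) : t ^ 2 * ‖A‖ ^ 2 / (‖A‖ ^ 2 + B) = t ^ 2 * Γ / (1 + Γ) := by
    simp only [Γ]
    field_simp
    ring
  constructor
  · intro γ hγ ξ
    have hξ := two_mul_inner_sub_norm_sq_mul_le ξ A (√(1 + γ)) hC
    rw [hsnr, sq_sqrt (by linarith)] at hξ
    have hdual := lagrangianDualObjective_le hΓ hγ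
    rw [lagrangianDualObjective] at hdual
    rw [Complex.re_conj_mul_eq_inner]
    linarith
  · have hξ : (√(1 + Γ) : ℂ) * A / ((‖A‖ ^ 2 + B : ℝ) : ℂ) = (√(1 + Γ) / (‖A‖ ^ 2 + B)) • A := by
      rw [Complex.real_smul, Complex.ofReal_div, div_mul_eq_mul_div]
    have hdual := lagrangianDualObjective_self hΓ
    rw [lagrangianDualObjective] at hdual
    rw [hξ, Complex.re_conj_mul_eq_inner, add_sub_assoc, two_mul_inner_smul_sub_norm_sq_mul A _ hC.ne',
      hsnr, sq_sqrt (by linarith)]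
    linarith
end

section
/- Let Z be an n×n complex Hermitian matrix, ζ ∈ ℝ such that ζ I − Z is positive semidefinite, and q ∈ ℂⁿ. Define g(θ) = Re(θᴴ Z θ) − 2 Re(θᴴ q). Then for all θ, θ₀ ∈ ℂⁿ with |θᵢ| = 1 and |(θ₀)ᵢ| = 1 for every i, g(θ) ≤ 2 Re(θᴴ ((Z − ζ I) θ₀ − q)) + 2 ζ n − Re(θ₀ᴴ Z θ₀), and this bound holds with equality when θ = θ₀. -/
open Matrix ComplexOrder

/-
Write `M = ζ I - Z`, which is positive semidefinite. Expanding `0 ≤ Re((θ - θ₀)ᴴ M (θ - θ₀))`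
gives `2 Re(θᴴ M θ₀) ≤ Re(θᴴ M θ) + Re(θ₀ᴴ M θ₀)`, and for unit-modulus vectors
`Re(xᴴ M x) = ζ n - Re(xᴴ Z x)` since `xᴴ x = n`. This is exactly the majorization; at `θ = θ₀`
the expansion is an identity.
-/

section

variable {ι : Type*} [Fintype ι]

theorem star_dotProduct_self_of_norm_eq_one {x : ι → ℂ} (hx : ∀ i, ‖x i‖ = 1) :
    star x ⬝ᵥ x = Fintype.card ι := by
  simp [dotProduct, Complex.conj_mul', hx]

variable [DecidableEq ι]

theorem re_dotProduct_smul_one_sub_mulVec_self_of_norm_eq_one (Z : Matrix ι ι ℂ) (ζ : ℝ)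
    {x : ι → ℂ} (hx : ∀ i, ‖x i‖ = 1) :
    (star x ⬝ᵥ ((ζ : ℂ) • 1 - Z) *ᵥ x).re = ζ * Fintype.card ι - (star x ⬝ᵥ Z *ᵥ x).re := by
  rw [sub_mulVec, dotProduct_sub, smul_mulVec, one_mulVec, dotProduct_smul,
    star_dotProduct_self_of_norm_eq_one hx]
  simp

end

section

variable {ι : Type*} [Fintype ι] {M : Matrix ι ι ℂ}

theorem Matrix.IsHermitian.re_dotProduct_mulVec_comm (hM : M.IsHermitian) (x y : ι → ℂ) :
    (star y ⬝ᵥ M *ᵥ x).re = (star x ⬝ᵥ M *ᵥ y).re := by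
  rw [← Complex.conj_re, ← Complex.star_def, ← star_dotProduct_star, star_mulVec, hM.eq,
    star_star, dotProduct_mulVec]

theorem Matrix.IsHermitian.re_dotProduct_mulVec_sub (hM : M.IsHermitian) (x y : ι → ℂ) :
    (star (x - y) ⬝ᵥ M *ᵥ (x - y)).re
      = (star x ⬝ᵥ M *ᵥ x).re - 2 * (star x ⬝ᵥ M *ᵥ y).re + (star y ⬝ᵥ M *ᵥ y).re := by
  rw [star_sub, mulVec_sub, sub_dotProduct, dotProduct_sub, dotProduct_sub]
  simp only [Complex.sub_re, hM.re_dotProduct_mulVec_comm x y]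
  ring

theorem Matrix.PosSemidef.two_mul_re_dotProduct_mulVec_le (hM : M.PosSemidef) (x y : ι → ℂ) :
    2 * (star x ⬝ᵥ M *ᵥ y).re ≤ (star x ⬝ᵥ M *ᵥ x).re + (star y ⬝ᵥ M *ᵥ y).re := by
  have h := (Complex.le_def.mp (hM.dotProduct_mulVec_nonneg (x - y))).1
  rw [hM.isHermitian.re_dotProduct_mulVec_sub] at h
  simp only [Complex.zero_re] at h
  linarith

end

theorem mm_majorizer_valid_tangent_general {n : ℕ} (Z : Matrix (Fin n) (Fin n) ℂ)
    (ζ : ℝ)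
    (hζ : ((ζ : ℂ) • (1 : Matrix (Fin n) (Fin n) ℂ) - Z).PosSemidef)
    (q : Fin n → ℂ) :
    let g : (Fin n → ℂ) → ℝ := fun θ => (star θ ⬝ᵥ Z *ᵥ θ).re - 2 * (star θ ⬝ᵥ q).re
    ∀ θ θ₀ : Fin n → ℂ, (∀ i, ‖θ i‖ = 1) → (∀ i, ‖θ₀ i‖ = 1) →
      (g θ ≤ 2 * (star θ ⬝ᵥ ((Z - (ζ : ℂ) • (1 : Matrix (Fin n) (Fin n) ℂ)) *ᵥ θ₀ - q)).re
          + 2 * ζ * n - (star θ₀ ⬝ᵥ Z *ᵥ θ₀).re) ∧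
      (θ = θ₀ →
        g θ = 2 * (star θ ⬝ᵥ ((Z - (ζ : ℂ) • (1 : Matrix (Fin n) (Fin n) ℂ)) *ᵥ θ₀ - q)).re
          + 2 * ζ * n - (star θ₀ ⬝ᵥ Z *ᵥ θ₀).re) := by
  intro g θ θ₀ hθ hθ₀
  set M := (ζ : ℂ) • (1 : Matrix (Fin n) (Fin n) ℂ) - Z
  have hrhs : (star θ ⬝ᵥ ((Z - (ζ : ℂ) • 1) *ᵥ θ₀ - q)).re
      = -(star θ ⬝ᵥ M *ᵥ θ₀).re - (star θ ⬝ᵥ q).re := by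
    rw [show Z - (ζ : ℂ) • 1 = -M from (neg_sub _ _).symm, neg_mulVec, dotProduct_sub, dotProduct_neg]
    simp
  have hMθ := re_dotProduct_smul_one_sub_mulVec_self_of_norm_eq_one Z ζ hθ
  have hMθ₀ := re_dotProduct_smul_one_sub_mulVec_self_of_norm_eq_one Z ζ hθ₀
  simp only [Fintype.card_fin] at hMθ hMθ₀
  refine ⟨?_, fun hθθ₀ => ?_⟩
  · have := hζ.two_mul_re_dotProduct_mulVec_le θ θ₀
    simp only [g, hrhs]
    linarith
  · subst hθθ₀
    simp only [g, hrhs]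
    linarith

/-- Validity and tangency of the MM majorizer for the IRS phase-shift subproblem: for
unit-modulus `θ, θ₀`, `g(θ) ≤ 2 Re(θᴴ ((Z − ζI)θ₀ − q)) + 2ζn − Re(θ₀ᴴ Z θ₀)`, with
equality when `θ = θ₀`. -/
theorem mm_majorizer_valid_tangent {n : ℕ} (Z : Matrix (Fin n) (Fin n) ℂ)
    (hZ : Z.IsHermitian) (ζ : ℝ)
    (hζ : ((ζ : ℂ) • (1 : Matrix (Fin n) (Fin n) ℂ) - Z).PosSemidef)
    (q : Fin n → ℂ) :
    let g : (Fin n → ℂ) → ℝ := fun θ => (star θ ⬝ᵥ Z *ᵥ θ).re - 2 * (star θ ⬝ᵥ q).re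
    ∀ θ θ₀ : Fin n → ℂ, (∀ i, ‖θ i‖ = 1) → (∀ i, ‖θ₀ i‖ = 1) →
      (g θ ≤ 2 * (star θ ⬝ᵥ ((Z - (ζ : ℂ) • (1 : Matrix (Fin n) (Fin n) ℂ)) *ᵥ θ₀ - q)).re
          + 2 * ζ * n - (star θ₀ ⬝ᵥ Z *ᵥ θ₀).re) ∧
      (θ = θ₀ →
        g θ = 2 * (star θ ⬝ᵥ ((Z - (ζ : ℂ) • (1 : Matrix (Fin n) (Fin n) ℂ)) *ᵥ θ₀ - q)).re
          + 2 * ζ * n - (star θ₀ ⬝ᵥ Z *ᵥ θ₀).re) :=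
  mm_majorizer_valid_tangent_general Z ζ hζ q
end
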